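/- arXiv:1402.2984 — 4 statements merged into one kernel-verified Lean document; each statement's English description precedes it below -/
import Mathlib

section
/- With the same setup as the previous statement, and additionally defining Λ ≥ 1 with λ ≥ Λ^{-1}, and assuming |φ(v')| ≤ Λ sup_{v'' ∈ [u,v']} |(rφ)'(v'')| for all v' ∈ [u,v], one has μ(v)/r(v) ≤ Λ² · (sup_{v' ∈ [u,v]} |(rφ)'(v')|) · (sup_{v' ∈ [u,v]} |φ'(v')|). -/
/-!
Write `λ = r'` and `ψ = (rφ)'`, so that `2m' = (1 - μ) λ⁻¹ r² φ'²`. The identity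
`λ⁻¹ r φ' = λ⁻¹ ψ - φ` together with `λ⁻¹ ≤ Λ` and the assumed bound `|φ| ≤ Λ sup |ψ|` gives
`|λ⁻¹ r φ'| ≤ 2Λ sup |ψ|`; with `1 - μ ≤ 1` and `1 ≤ Λλ` this yields
`2m' ≤ 2Λ² sup |ψ| sup |φ'| · rλ`. Integrating from the axis, where `r = 0`, and using
`∫ rλ = r(v)²/2` gives `2m(v) ≤ Λ² sup |ψ| sup |φ'| · r(v)²`. The suprema are genuine
(not the junk value `0` of an unbounded `⨆`) because `φ` and `rφ` are Lipschitz on `[u, v]`.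
-/

open Set MeasureTheory Filter
open scoped NNReal

lemma norm_deriv_le_of_lipschitzOnWith_of_accPt {𝕜 F : Type*} [NontriviallyNormedField 𝕜]
    [NormedAddCommGroup F] [NormedSpace 𝕜 F] {f : 𝕜 → F} {s : Set 𝕜} {x : 𝕜} {K : ℝ≥0}
    (hf : LipschitzOnWith K f s) (hx : x ∈ s) (hacc : AccPt x (𝓟 s)) : ‖deriv f x‖ ≤ K := by
  by_cases hd : DifferentiableAt 𝕜 f x
  · have hslope := hasDerivWithinAt_iff_tendsto_slope.1 (hd.hasDerivAt.hasDerivWithinAt (s := s))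
    have := accPt_principal_iff_nhdsWithin.1 hacc
    refine le_of_tendsto hslope.norm (eventually_nhdsWithin_of_forall fun y hy => ?_)
    have hyx : 0 < ‖y - x‖ := norm_pos_iff.2 (sub_ne_zero.2 hy.2)
    rw [slope_def_module, norm_smul, norm_inv, inv_mul_le_iff₀ hyx, mul_comm, ← dist_eq_norm,
      ← dist_eq_norm]
    exact hf.dist_le_mul y hy.1 x hx
  · simp [deriv_zero_of_not_differentiableAt hd]

lemma LipschitzOnWith.mul_of_norm_le {X α : Type*} [PseudoMetricSpace X] [SeminormedRing α]
    {f g : X → α} {s : Set X} {Kf Kg A B : ℝ≥0} (hf : LipschitzOnWith Kf f s)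
    (hg : LipschitzOnWith Kg g s) (hfA : ∀ x ∈ s, ‖f x‖ ≤ A) (hgB : ∀ x ∈ s, ‖g x‖ ≤ B) :
    LipschitzOnWith (A * Kg + B * Kf) (fun x => f x * g x) s := by
  refine LipschitzOnWith.of_dist_le_mul fun x hx y hy => ?_
  rw [dist_eq_norm]
  calc ‖f x * g x - f y * g y‖ = ‖f x * (g x - g y) + (f x - f y) * g y‖ := by
        congr 1; noncomm_ring
    _ ≤ ‖f x‖ * ‖g x - g y‖ + ‖f x - f y‖ * ‖g y‖ :=
        (norm_add_le _ _).trans (add_le_add (norm_mul_le _ _) (norm_mul_le _ _))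
    _ ≤ A * (Kg * dist x y) + Kf * dist x y * B := by
        rw [← dist_eq_norm, ← dist_eq_norm]
        gcongr
        exacts [hfA x hx, hg.dist_le_mul x hx y hy, hf.dist_le_mul x hx y hy, hgB y hy]
    _ = ↑(A * Kg + B * Kf) * dist x y := by push_cast; ring

lemma LipschitzOnWith.exists_mul_of_isCompact {X α : Type*} [PseudoMetricSpace X]
    [SeminormedRing α] {f g : X → α} {s : Set X} {Kf Kg : ℝ≥0} (hs : IsCompact s)
    (hf : LipschitzOnWith Kf f s) (hg : LipschitzOnWith Kg g s) :
    ∃ K, LipschitzOnWith K (fun x => f x * g x) s := by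
  obtain ⟨A, hA⟩ := hs.exists_bound_of_continuousOn hf.continuousOn
  obtain ⟨B, hB⟩ := hs.exists_bound_of_continuousOn hg.continuousOn
  exact ⟨_, hf.mul_of_norm_le hg (fun x hx => (hA x hx).trans (Real.le_coe_toNNReal A))
    (fun x hx => (hB x hx).trans (Real.le_coe_toNNReal B))⟩

lemma Real.le_biSup {ι : Type*} {f : ι → ℝ} {s : Set ι} {C : ℝ} {t : ι}
    (hb : ∀ x ∈ s, f x ≤ C) (ht : t ∈ s) : f t ≤ ⨆ x ∈ s, f x := by
  have hbdd : BddAbove (range fun x => ⨆ _ : x ∈ s, f x) := ⟨max C 0, by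
    rintro _ ⟨x, rfl⟩
    exact Real.iSup_le (fun hx => (hb x hx).trans (le_max_left _ _)) (le_max_right _ _)⟩
  exact le_ciSup_of_le hbdd t (ciSup_pos (f := fun _ => f t) ht).ge

lemma abs_deriv_le_biSup_Icc {f : ℝ → ℝ} {K : ℝ≥0} {u v t : ℝ}
    (hf : LipschitzOnWith K f (Icc u v)) (huv : u < v) (ht : t ∈ Icc u v) :
    |deriv f t| ≤ ⨆ x ∈ Icc u v, |deriv f x| :=
  Real.le_biSup (fun x hx =>
    norm_deriv_le_of_lipschitzOnWith_of_accPt hf hx (uniqueDiffOn_Icc huv x hx).accPt) ht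

lemma intervalIntegral.integral_le_of_le_mul_self_mul_deriv {f r r' : ℝ → ℝ} {u v c : ℝ}
    (huv : u ≤ v) (hc : 0 ≤ c) (hr : ∀ t ∈ Icc u v, HasDerivAt r (r' t) t)
    (hrr' : ∀ t ∈ Icc u v, 0 ≤ r t * r' t) (hf : ∀ t ∈ Icc u v, f t ≤ c * (r t * r' t)) :
    ∫ t in u..v, f t ≤ c * ((r v ^ 2 - r u ^ 2) / 2) := by
  have hderiv : ∀ t ∈ Icc u v, HasDerivAt (fun x => r x ^ 2 / 2) (r t * r' t) t := fun t ht =>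
    ((hr t ht).pow 2).div_const 2 |>.congr_deriv (by push_cast; ring)
  have hcont : ContinuousOn (fun x => r x ^ 2 / 2) (Icc u v) :=
    fun t ht => (hderiv t ht).continuousAt.continuousWithinAt
  have hint : IntervalIntegrable (fun t => r t * r' t) volume u v :=
    (intervalIntegrable_iff_integrableOn_Ioc_of_le huv).2 <|
      integrableOn_deriv_of_nonneg hcont (fun t ht => hderiv t (Ioo_subset_Icc_self ht))
        (fun t ht => hrr' t (Ioo_subset_Icc_self ht))
  have hmono : ∫ t in u..v, f t ≤ ∫ t in u..v, c * (r t * r' t) := by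
    by_cases hfi : IntervalIntegrable f volume u v
    · exact integral_mono_on huv hfi (hint.const_mul c) hf
    · rw [integral_undef hfi]
      exact integral_nonneg huv fun t ht => mul_nonneg hc (hrr' t ht)
  rwa [integral_const_mul, integral_eq_sub_of_hasDerivAt_of_le huv hcont
    (fun t ht => hderiv t (Ioo_subset_Icc_self ht)) hint, ← sub_div] at hmono

lemma abs_inv_mul_le_of_abs_mul_add_le {Λ S l φ ψ : ℝ} (hΛ : 0 < Λ) (hl : Λ⁻¹ ≤ l)
    (hψ : |l * φ + ψ| ≤ S) (hφ : |φ| ≤ Λ * S) : |l⁻¹ * ψ| ≤ 2 * Λ * S := by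
  have hl0 : 0 < l := (inv_pos.2 hΛ).trans_le hl
  have hinv : l⁻¹ ≤ Λ := by simpa using inv_anti₀ (inv_pos.2 hΛ) hl
  calc |l⁻¹ * ψ| = |l⁻¹ * (l * φ + ψ) - φ| := by congr 1; field_simp; ring
    _ ≤ |l⁻¹ * (l * φ + ψ)| + |φ| := abs_sub _ _
    _ ≤ Λ * S + Λ * S := by
        rw [abs_mul, abs_of_pos (inv_pos.2 hl0)]
        gcongr
    _ = 2 * Λ * S := by ring

/-- `∂_v m = ½ (1 - μ) λ⁻¹ r² (∂_v φ)²` with `μ = 2m/r` and `λ = ∂_v r`. -/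
noncomputable def massIntegrand (r φ m : ℝ → ℝ) (t : ℝ) : ℝ :=
  (1 - 2 * m t / r t) * (deriv r t)⁻¹ * (r t) ^ 2 * (deriv φ t) ^ 2

lemma massIntegrand_le {r φ m : ℝ → ℝ} {t Λ S T : ℝ} (hΛ : 0 < Λ) (hl : Λ⁻¹ ≤ deriv r t)
    (hr : 0 ≤ r t) (hμ : 1 - 2 * m t / r t ≤ 1) (hψ : |deriv (fun x => r x * φ x) t| ≤ S)
    (hφ : |φ t| ≤ Λ * S) (hφ' : |deriv φ t| ≤ T) :
    massIntegrand r φ m t ≤ 2 * Λ ^ 2 * S * T * (r t * deriv r t) := by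
  have hl0 : 0 < deriv r t := (inv_pos.2 hΛ).trans_le hl
  have hS : 0 ≤ S := (abs_nonneg _).trans hψ
  have hT : 0 ≤ T := (abs_nonneg _).trans hφ'
  by_cases hφd : DifferentiableAt ℝ φ t
  · have hrd : DifferentiableAt ℝ r t := differentiableAt_of_deriv_ne_zero hl0.ne'
    have hprod : deriv (fun x => r x * φ x) t = deriv r t * φ t + r t * deriv φ t :=
      (hrd.hasDerivAt.mul hφd.hasDerivAt).deriv
    rw [hprod] at hψ
    have hX := abs_inv_mul_le_of_abs_mul_add_le hΛ hl hψ hφ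
    have hY : |r t * deriv φ t| ≤ r t * T := by rw [abs_mul, abs_of_nonneg hr]; gcongr
    have hΛl : 1 ≤ Λ * deriv r t := by simpa [hΛ.ne'] using mul_le_mul_of_nonneg_left hl hΛ.le
    set X := (deriv r t)⁻¹ * (r t * deriv φ t)
    calc massIntegrand r φ m t = (1 - 2 * m t / r t) * (X * (r t * deriv φ t)) := by
          simp only [massIntegrand, X]; ring
      _ ≤ X * (r t * deriv φ t) := by
          refine mul_le_of_le_one_left ?_ hμ
          rw [mul_assoc]
          exact mul_nonneg (inv_nonneg.2 hl0.le) (mul_self_nonneg _)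
      _ ≤ |X| * |r t * deriv φ t| := (le_abs_self _).trans (abs_mul _ _).le
      _ ≤ 2 * Λ * S * (r t * T) := by gcongr
      _ ≤ 2 * Λ * S * (r t * T) * (Λ * deriv r t) := le_mul_of_one_le_right (by positivity) hΛl
      _ = 2 * Λ ^ 2 * S * T * (r t * deriv r t) := by ring
  · rw [massIntegrand, deriv_zero_of_not_differentiableAt hφd, zero_pow two_ne_zero, mul_zero]
    positivity

theorem stmt_6_general (u v : ℝ) (huv : u ≤ v) (r φ m : ℝ → ℝ) (Kr Kφ : NNReal)
    (hr : LipschitzOnWith Kr r (Icc u v)) (hmono : MonotoneOn r (Icc u v))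
    (hr0 : r u = 0) (hφ : LipschitzOnWith Kφ φ (Icc u v))
    (hm : ∀ x ∈ Icc u v, m x =
      (1/2) * ∫ t in u..x,
        (1 - 2 * m t / r t) * (deriv r t)⁻¹ * (r t)^2 * (deriv φ t)^2)
    (hμ : ∀ x ∈ Icc u v, 0 ≤ 1 - 2 * m x / r x ∧ 1 - 2 * m x / r x ≤ 1)
    (Λ : ℝ) (hΛ : 1 ≤ Λ)
    (hlamlb : ∀ x ∈ Icc u v, Λ⁻¹ ≤ deriv r x)
    (hφbound : ∀ v' ∈ Icc u v,
      |φ v'| ≤ Λ * ⨆ v'' ∈ Icc u v', |deriv (fun x => r x * φ x) v''|) :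
    (2 * m v / r v) / r v ≤
      Λ^2 * (⨆ v' ∈ Icc u v, |deriv (fun x => r x * φ x) v'|) *
        ⨆ v' ∈ Icc u v, |deriv φ v'| := by
  set S := ⨆ v' ∈ Icc u v, |deriv (fun x => r x * φ x) v'|
  set T := ⨆ v' ∈ Icc u v, |deriv φ v'|
  have hS : 0 ≤ S := Real.iSup_nonneg fun _ => Real.iSup_nonneg fun _ => abs_nonneg _
  have hT : 0 ≤ T := Real.iSup_nonneg fun _ => Real.iSup_nonneg fun _ => abs_nonneg _
  have hΛ0 : 0 < Λ := one_pos.trans_le hΛ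
  rcases huv.eq_or_lt with rfl | hlt
  · simp only [hr0, div_zero]
    positivity
  obtain ⟨K, hrφ⟩ := hr.exists_mul_of_isCompact isCompact_Icc hφ
  have hψS : ∀ t ∈ Icc u v, |deriv (fun x => r x * φ x) t| ≤ S :=
    fun t ht => abs_deriv_le_biSup_Icc hrφ hlt ht
  have hφS : ∀ t ∈ Icc u v, |φ t| ≤ Λ * S := fun t ht => (hφbound t ht).trans <| by
    gcongr
    exact Real.iSup_le (fun x => Real.iSup_le (fun hx => hψS x ⟨hx.1, hx.2.trans ht.2⟩) hS) hS
  have hl0 : ∀ t ∈ Icc u v, 0 < deriv r t := fun t ht => (inv_pos.2 hΛ0).trans_le (hlamlb t ht)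
  have hr_nonneg : ∀ t ∈ Icc u v, 0 ≤ r t := fun t ht => hr0 ▸ hmono ⟨le_rfl, huv⟩ ht ht.1
  have hφ'T : ∀ t ∈ Icc u v, |deriv φ t| ≤ T := fun t ht => abs_deriv_le_biSup_Icc hφ hlt ht
  have hintegral := intervalIntegral.integral_le_of_le_mul_self_mul_deriv huv (by positivity)
    (fun t ht => (differentiableAt_of_deriv_ne_zero (hl0 t ht).ne').hasDerivAt)
    (fun t ht => mul_nonneg (hr_nonneg t ht) (hl0 t ht).le)
    (fun t ht => massIntegrand_le hΛ0 (hlamlb t ht) (hr_nonneg t ht) (hμ t ht).2 (hψS t ht)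
      (hφS t ht) (hφ'T t ht))
  have hmv : 2 * m v = ∫ t in u..v, massIntegrand r φ m t := by
    rw [hm v ⟨huv, le_rfl⟩]; simp only [massIntegrand]; ring
  rw [div_div, ← sq]
  refine div_le_of_le_mul₀ (sq_nonneg _) (by positivity) ?_
  rw [hr0] at hintegral
  linarith

/-- Bound for the Hawking mass ratio `μ/r` near the axis in terms of
`sup |(rφ)'|` and `sup |φ'|`. -/
theorem stmt_6 (u v : ℝ) (huv : u ≤ v) (r φ m : ℝ → ℝ) (Kr Kφ : NNReal)
    (hr : LipschitzOnWith Kr r (Icc u v)) (hmono : MonotoneOn r (Icc u v))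
    (hr0 : r u = 0) (hφ : LipschitzOnWith Kφ φ (Icc u v))
    (hlam0 : ∀ x ∈ Icc u v, 0 < deriv r x)
    (hm : ∀ x ∈ Icc u v, m x =
      (1/2) * ∫ t in u..x,
        (1 - 2 * m t / r t) * (deriv r t)⁻¹ * (r t)^2 * (deriv φ t)^2)
    (hμ : ∀ x ∈ Icc u v, 0 ≤ 1 - 2 * m x / r x ∧ 1 - 2 * m x / r x ≤ 1)
    (Λ : ℝ) (hΛ : 1 ≤ Λ)
    (hlamlb : ∀ x ∈ Icc u v, Λ⁻¹ ≤ deriv r x)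
    (hφbound : ∀ v' ∈ Icc u v,
      |φ v'| ≤ Λ * ⨆ v'' ∈ Icc u v', |deriv (fun x => r x * φ x) v''|) :
    (2 * m v / r v) / r v ≤
      Λ^2 * (⨆ v' ∈ Icc u v, |deriv (fun x => r x * φ x) v'|) *
        ⨆ v' ∈ Icc u v, |deriv φ v'| :=
  stmt_6_general u v huv r φ m Kr Kφ hr hmono hr0 hφ hm hμ Λ hΛ hlamlb hφbound
end

section
/- Let C ≥ 1 be a constant, let ε > 0, and let v ↦ I₁(v), I₂(v) be continuous nondecreasing nonnegative functions on [u₀, V] with I₁(u₀) = I₂(u₀) = 0 such that for all v ∈ [u₀, V] one has I₁(v) ≤ 3ε + C·I₁(v)·I₂(v) and I₂(v) ≤ 3ε + C·I₁(v)²(1+I₁(v))²(1+I₂(v))²·exp(C·I₁(v)²(1+I₂(v))). Then, if ε is sufficiently small depending only on C, I₁(v) ≤ 4Cε and I₂(v) ≤ 4ε for all v ∈ [u₀, V]. -/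
open Set MeasureTheory

open Topology Filter

set_option maxHeartbeats 1000000 in
/-- Key arithmetic improvement step for the bootstrap. -/
lemma stmt_12_key (C ε x y : ℝ) (hC : 1 ≤ C) (hε : 0 < ε)
    (hε0 : ε ≤ 1/(10000*C^3)) (hx : 0 ≤ x) (hy : 0 ≤ y)
    (hx4 : x ≤ 4*C*ε) (hy4 : y ≤ 4*ε) :
    3*ε + C*x*y < 4*C*ε ∧
      3*ε + C*x^2*(1+x)^2*(1+y)^2*Real.exp (C*x^2*(1+y)) < 4*ε := by
  have hCpos : (0:ℝ) < C := lt_of_lt_of_le one_pos hC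
  have hC3 : (1:ℝ) ≤ C^3 := by
    nlinarith [mul_nonneg (sub_nonneg.mpr hC) (by positivity : (0:ℝ) ≤ C^2+C+1)]
  have hC3pos : (0:ℝ) < 10000*C^3 := by positivity
  have hmain : ε * (10000*C^3) ≤ 1 := by
    rw [← le_div_iff₀ hC3pos]; exact hε0
  have hCle : C ≤ C^3 := by
    nlinarith [mul_nonneg (mul_nonneg hCpos.le (sub_nonneg.mpr hC)) (by positivity : (0:ℝ) ≤ C+1)]
  have hCε : C*ε ≤ 1/10000 := by nlinarith [mul_nonneg (sub_nonneg.mpr hCle) hε.le]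
  have hεs : ε ≤ 1/10000 := by nlinarith
  have hx1 : x ≤ 1 := by linarith
  have hy1 : y ≤ 1 := by linarith
  have hx2 : x^2 ≤ 16*C^2*ε^2 := by nlinarith [mul_self_le_mul_self hx hx4]
  have hC3e2 : C^3*ε^2 ≤ ε/10000 := by nlinarith
  have hC2e2 : C^2*ε^2 ≤ C^3*ε^2 := by
    nlinarith [mul_nonneg (mul_nonneg hCpos.le (mul_nonneg hCpos.le (sub_nonneg.mpr hC))) (sq_nonneg ε)]
  have hCx2 : C*x^2 ≤ 16*C^3*ε^2 := by nlinarith [mul_le_mul_of_nonneg_left hx2 hCpos.le]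
  constructor
  · have hxy : x*y ≤ (4*C*ε)*(4*ε) := mul_le_mul hx4 hy4 hy (by positivity)
    have hxy' : C*(x*y) ≤ C*((4*C*ε)*(4*ε)) := mul_le_mul_of_nonneg_left hxy hCpos.le
    have h4 : 4*ε ≤ 4*C*ε := by nlinarith
    nlinarith
  · have hexp1 : C*x^2*(1+y) ≤ 1 := by
      have h := mul_le_mul hCx2 (show 1+y ≤ 2 by linarith) (by linarith) (by positivity)
      nlinarith
    have hexp : Real.exp (C*x^2*(1+y)) ≤ 3 := by
      have h1e : Real.exp (C*x^2*(1+y)) ≤ Real.exp 1 := Real.exp_le_exp.mpr hexp1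
      have h2e : Real.exp 1 < 3 := by
        have h := Real.exp_one_lt_d9
        norm_num at h
        linarith
      linarith
    have p1 : (1+x)^2 ≤ 4 := by nlinarith [mul_self_le_mul_self hx hx1]
    have p2 : (1+y)^2 ≤ 4 := by nlinarith [mul_self_le_mul_self hy hy1]
    have h0 : (0:ℝ) ≤ C*x^2 := by positivity
    have hA : C*x^2*(1+x)^2*(1+y)^2 ≤ C*x^2*4*4 :=
      calc C*x^2*(1+x)^2*(1+y)^2 ≤ C*x^2*4*(1+y)^2 :=
            mul_le_mul_of_nonneg_right (mul_le_mul_of_nonneg_left p1 h0) (sq_nonneg _)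
        _ ≤ C*x^2*4*4 := mul_le_mul_of_nonneg_left p2 (by positivity)
    have hT : C*x^2*(1+x)^2*(1+y)^2*Real.exp (C*x^2*(1+y)) ≤ (C*x^2*4*4)*3 :=
      mul_le_mul hA hexp (Real.exp_pos _).le (by positivity)
    nlinarith

/-- The continuity (bootstrap) argument at the heart of the dichotomy theorem:
smallness of the coupled quantities `I₁, I₂` propagates from the axis. -/
theorem stmt_12 (C : ℝ) (hC : 1 ≤ C) :
    ∃ ε₀ > (0:ℝ), ∀ ε : ℝ, 0 < ε → ε ≤ ε₀ →
      ∀ (u₀ V : ℝ) (I₁ I₂ : ℝ → ℝ), u₀ ≤ V →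
        ContinuousOn I₁ (Icc u₀ V) → ContinuousOn I₂ (Icc u₀ V) →
        MonotoneOn I₁ (Icc u₀ V) → MonotoneOn I₂ (Icc u₀ V) →
        I₁ u₀ = 0 → I₂ u₀ = 0 →
        (∀ v ∈ Icc u₀ V, 0 ≤ I₁ v ∧ 0 ≤ I₂ v) →
        (∀ v ∈ Icc u₀ V, I₁ v ≤ 3*ε + C * I₁ v * I₂ v) →
        (∀ v ∈ Icc u₀ V, I₂ v ≤ 3*ε +
          C * (I₁ v)^2 * (1 + I₁ v)^2 * (1 + I₂ v)^2 *
            Real.exp (C * (I₁ v)^2 * (1 + I₂ v))) →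
        ∀ v ∈ Icc u₀ V, I₁ v ≤ 4*C*ε ∧ I₂ v ≤ 4*ε := by
  have hCpos : (0:ℝ) < C := lt_of_lt_of_le one_pos hC
  refine ⟨1/(10000*C^3), by positivity, ?_⟩
  intro ε hε hε0 u₀ V I₁ I₂ huV hc1 hc2 hm1 hm2 h10 h20 hnn h1 h2
  -- The bootstrap set
  set S : Set ℝ := Icc u₀ V ∩ I₁ ⁻¹' (Iic (4*C*ε)) ∩ I₂ ⁻¹' (Iic (4*ε)) with hS
  have hu₀S : u₀ ∈ S := by
    refine ⟨⟨⟨le_refl _, huV⟩, ?_⟩, ?_⟩ <;> simp [h10, h20] <;> positivity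
  have hSsub : S ⊆ Icc u₀ V := fun x hx => hx.1.1
  have hSne : S.Nonempty := ⟨u₀, hu₀S⟩
  have hSbdd : BddAbove S := ⟨V, fun x hx => (hSsub hx).2⟩
  have hSclosed : IsClosed S := by
    have h₁ : IsClosed (Icc u₀ V ∩ I₁ ⁻¹' (Iic (4*C*ε))) :=
      hc1.preimage_isClosed_of_isClosed isClosed_Icc isClosed_Iic
    have hc2' : ContinuousOn I₂ (Icc u₀ V ∩ I₁ ⁻¹' (Iic (4*C*ε))) :=
      hc2.mono inter_subset_left
    exact hc2'.preimage_isClosed_of_isClosed h₁ isClosed_Iic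
  set t := sSup S with ht
  have htS : t ∈ S := hSclosed.csSup_mem hSne hSbdd
  have htIcc : t ∈ Icc u₀ V := hSsub htS
  have htI1 : I₁ t ≤ 4*C*ε := htS.1.2
  have htI2 : I₂ t ≤ 4*ε := htS.2
  have hkey := stmt_12_key C ε (I₁ t) (I₂ t) hC hε hε0 (hnn t htIcc).1 (hnn t htIcc).2
    htI1 htI2
  have hI1t : I₁ t < 4*C*ε := lt_of_le_of_lt (h1 t htIcc) (hkey.1)
  have hI2t : I₂ t < 4*ε := lt_of_le_of_lt (h2 t htIcc) (hkey.2)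
  -- t must equal V
  have htV : t = V := by
    by_contra hne
    have htltV : t < V := lt_of_le_of_ne htIcc.2 hne
    have hsub : Ioc t V ⊆ Icc u₀ V := fun x hx => ⟨le_trans htIcc.1 hx.1.le, hx.2⟩
    have hne1 : (𝓝[Ioc t V] t).NeBot := left_nhdsWithin_Ioc_neBot htltV
    have hcw1 : Filter.Tendsto I₁ (𝓝[Ioc t V] t) (𝓝 (I₁ t)) :=
      ((hc1.continuousWithinAt htIcc).mono hsub)
    have hcw2 : Filter.Tendsto I₂ (𝓝[Ioc t V] t) (𝓝 (I₂ t)) :=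
      ((hc2.continuousWithinAt htIcc).mono hsub)
    have hev1 : ∀ᶠ x in 𝓝[Ioc t V] t, I₁ x < 4*C*ε := hcw1.eventually_lt_const hI1t
    have hev2 : ∀ᶠ x in 𝓝[Ioc t V] t, I₂ x < 4*ε := hcw2.eventually_lt_const hI2t
    have hev3 : ∀ᶠ x in 𝓝[Ioc t V] t, x ∈ Ioc t V := self_mem_nhdsWithin
    obtain ⟨x, hx1, hx2, hx3⟩ := (hev1.and (hev2.and hev3)).exists
    have hxS : x ∈ S := ⟨⟨hsub hx3, le_of_lt hx1⟩, le_of_lt hx2⟩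
    have : x ≤ t := le_csSup hSbdd hxS
    exact absurd (lt_of_lt_of_le hx3.1 this) (lt_irrefl _)
  intro v hv
  have hvt : v ≤ t := htV ▸ hv.2
  constructor
  · exact le_trans (hm1 hv htIcc hvt) htI1
  · exact le_trans (hm2 hv htIcc hvt) htI2
end

section
/- Let ν : [u,v] → ℝ (as a function of the second variable v') be continuous with ν(v') < 0, ∂_{v'} ν ≤ 0, ν ≥ −K, and let φ with |φ(v')| ≤ ΛΨ for all v'. Suppose h : [u,v] → ℝ satisfies h(u) = h₀ with |h₀| ≤ Ψ and h'(v') = (∂_{v'}ν)(v')·φ(v'). Then |h(v)| ≤ Ψ + ΛΨ·(−ν(v) + ν(u)) ≤ Ψ + ΛΨK ≤ (1 + ΛK)Ψ. -/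
open Set MeasureTheory

/-- `x ↦ C + M * (g a - g x)` is a barrier for `|f|` on `[a, b]`. -/
theorem abs_le_add_mul_sub_of_abs_deriv_le_mul_neg_deriv {a b C M : ℝ} {f f' g g' : ℝ → ℝ}
    (hab : a ≤ b) (hfc : ContinuousOn f (Icc a b))
    (hf : ∀ x ∈ Ico a b, HasDerivWithinAt f (f' x) (Ici x) x)
    (hgc : ContinuousOn g (Icc a b)) (hg : ∀ x ∈ Ico a b, HasDerivWithinAt g (g' x) (Ici x) x)
    (hfa : |f a| ≤ C) (bound : ∀ x ∈ Ico a b, |f' x| ≤ M * -g' x) :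
    |f b| ≤ C + M * (g a - g b) := by
  have hB : ContinuousOn (fun x => C + M * (g a - g x)) (Icc a b) := by fun_prop
  have hB' (x : ℝ) (hx : x ∈ Ico a b) :
      HasDerivWithinAt (fun x => C + M * (g a - g x)) (M * -g' x) (Ici x) x := by
    simpa using ((hg x hx).const_sub (g a)).const_mul M |>.const_add C
  exact image_norm_le_of_norm_deriv_right_le_deriv_boundary' hfc hf (by simpa using hfa) hB hB'
    bound (right_mem_Icc.2 hab)

theorem abs_mul_le_mul_neg_of_nonpos {w φ M : ℝ} (hw : w ≤ 0) (hφ : |φ| ≤ M) :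
    |w * φ| ≤ M * -w := by
  rw [abs_mul, abs_of_nonpos hw, mul_comm]
  exact mul_le_mul_of_nonneg_right hφ (neg_nonneg.2 hw)

theorem stmt_17_general (u v K Λ Ψ h₀ : ℝ) (huv : u ≤ v)
    (hΛ : 0 ≤ Λ) (hΨ : 0 ≤ Ψ)
    (ν ν' φ h : ℝ → ℝ)
    (hνc : ContinuousOn ν (Icc u v))
    (hνd : ∀ x ∈ Icc u v, HasDerivAt ν (ν' x) x)
    (hνneg : ∀ x ∈ Icc u v, ν x < 0)
    (hν'le : ∀ x ∈ Icc u v, ν' x ≤ 0)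
    (hνK : ∀ x ∈ Icc u v, -K ≤ ν x)
    (hφ : ∀ x ∈ Icc u v, |φ x| ≤ Λ * Ψ)
    (hh0 : h u = h₀) (hh₀ : |h₀| ≤ Ψ)
    (hhd : ∀ x ∈ Icc u v, HasDerivAt h (ν' x * φ x) x) :
    |h v| ≤ Ψ + Λ * Ψ * (-(ν v) + ν u) ∧
    Ψ + Λ * Ψ * (-(ν v) + ν u) ≤ Ψ + Λ * Ψ * K ∧
    Ψ + Λ * Ψ * K ≤ (1 + Λ * K) * Ψ := by
  have hu : u ∈ Icc u v := left_mem_Icc.2 huv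
  have hv : v ∈ Icc u v := right_mem_Icc.2 huv
  refine ⟨?_, ?_, (by ring : Ψ + Λ * Ψ * K = (1 + Λ * K) * Ψ).le⟩
  · rw [neg_add_eq_sub]
    refine abs_le_add_mul_sub_of_abs_deriv_le_mul_neg_deriv huv
      (fun x hx => (hhd x hx).continuousAt.continuousWithinAt)
      (fun x hx => (hhd x (Ico_subset_Icc_self hx)).hasDerivWithinAt) hνc
      (fun x hx => (hνd x (Ico_subset_Icc_self hx)).hasDerivWithinAt) (hh0 ▸ hh₀)
      fun x hx => ?_
    exact abs_mul_le_mul_neg_of_nonpos (hν'le x (Ico_subset_Icc_self hx))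
      (hφ x (Ico_subset_Icc_self hx))
  · have : -(ν v) + ν u ≤ K := by linarith [hνneg u hu, hνK v hv]
    gcongr

/-- Uniform bound on `∂_u(rφ)`: integrating `h' = (∂_v ν)·φ` from the axis with
`|h(u)| ≤ Ψ`, `∂_v ν ≤ 0`, `−K ≤ ν < 0` and `|φ| ≤ ΛΨ` gives
`|h(v)| ≤ (1 + ΛK)Ψ`. -/
theorem stmt_17 (u v K Λ Ψ h₀ : ℝ) (huv : u ≤ v)
    (hK : 0 ≤ K) (hΛ : 0 ≤ Λ) (hΨ : 0 ≤ Ψ)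
    (ν ν' φ h : ℝ → ℝ)
    (hνc : ContinuousOn ν (Icc u v))
    (hνd : ∀ x ∈ Icc u v, HasDerivAt ν (ν' x) x)
    (hνneg : ∀ x ∈ Icc u v, ν x < 0)
    (hν'le : ∀ x ∈ Icc u v, ν' x ≤ 0)
    (hνK : ∀ x ∈ Icc u v, -K ≤ ν x)
    (hφ : ∀ x ∈ Icc u v, |φ x| ≤ Λ * Ψ)
    (hh0 : h u = h₀) (hh₀ : |h₀| ≤ Ψ)
    (hhd : ∀ x ∈ Icc u v, HasDerivAt h (ν' x * φ x) x) :
    |h v| ≤ Ψ + Λ * Ψ * (-(ν v) + ν u) ∧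
    Ψ + Λ * Ψ * (-(ν v) + ν u) ≤ Ψ + Λ * Ψ * K ∧
    Ψ + Λ * Ψ * K ≤ (1 + Λ * K) * Ψ :=
  stmt_17_general u v K Λ Ψ h₀ huv hΛ hΨ ν ν' φ h hνc hνd hνneg hν'le hνK hφ hh0 hh₀ hhd
end

section
/- Let ω ∈ (1,3], A > 0, K ≥ 1, and suppose φ, ψ : Q → ℝ on Q = {(u,v) : 1 ≤ u ≤ v} satisfy: |φ(u,v)| ≤ A u^{−ω}, |ψ(u,v)| ≤ A u^{−ω} for all (u,v), ψ being ∂_v(rφ), and h(u,v) := ∂_u(rφ) satisfies h(u,u⁺) = −ψ(u,u⁺) and ∂_v h(u,v) = (∂_v ν)(u,v)·φ(u,v) with ∂_v ν ≤ 0 and ∫_u^v |∂_v ν|(u,v') dv' ≤ K. Then |h(u,v)| ≤ (1+K) A u^{−ω} for all (u,v) ∈ Q. -/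
open Set MeasureTheory

/-- Propagation of `u`-decay from `∂_v(rφ)` and `φ` to `h = ∂_u(rφ)`: starting
from the axis where `h = −ψ`, integrating `∂_v h = (∂_v ν)·φ` with
`∂_v ν ≤ 0` and `∫ |∂_v ν| ≤ K` gives `|h| ≤ (1+K) A u^{−ω}`. -/
theorem stmt_18 (ω A K : ℝ) (hω1 : 1 < ω) (hω3 : ω ≤ 3) (hA : 0 < A) (hK : 1 ≤ K)
    (φ ψ h ν νv : ℝ → ℝ → ℝ)
    (hφ : ∀ u v : ℝ, 1 ≤ u → u ≤ v → |φ u v| ≤ A * u ^ (-ω))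
    (hψ : ∀ u v : ℝ, 1 ≤ u → u ≤ v → |ψ u v| ≤ A * u ^ (-ω))
    (haxis : ∀ u : ℝ, 1 ≤ u →
      Filter.Tendsto (fun v => h u v + ψ u v) (nhdsWithin u (Ioi u)) (nhds 0))
    (hνd : ∀ u v : ℝ, 1 ≤ u → u ≤ v → HasDerivAt (fun v' => ν u v') (νv u v) v)
    (hνv : ∀ u v : ℝ, 1 ≤ u → u ≤ v → νv u v ≤ 0)
    (hνint : ∀ u v : ℝ, 1 ≤ u → u ≤ v → (∫ v' in u..v, |νv u v'|) ≤ K)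
    (hhd : ∀ u v : ℝ, 1 ≤ u → u ≤ v →
      HasDerivAt (fun v' => h u v') (νv u v * φ u v) v) :
    ∀ u v : ℝ, 1 ≤ u → u ≤ v → |h u v| ≤ (1 + K) * A * u ^ (-ω) := by
  intro u v hu huv
  have hu0 : (0:ℝ) < u := lt_of_lt_of_le one_pos hu
  set C : ℝ := A * u ^ (-ω) with hCdef
  have hC : 0 < C := mul_pos hA (Real.rpow_pos_of_pos hu0 _)
  have hgoal : (1 + K) * A * u ^ (-ω) = C + K * C := by ring
  rw [hgoal]
  -- limit of |ψ| along the axis bounds things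
  rcases eq_or_lt_of_le huv with rfl | hlt
  · -- v = u : use continuity of h at u and the axis condition
    have hcont : Filter.Tendsto (fun t => h u t) (nhdsWithin u (Ioi u)) (nhds (h u u)) :=
      ((hhd u u hu le_rfl).continuousAt).continuousWithinAt
    have hRHS : Filter.Tendsto (fun t => |h u t + ψ u t| + C) (nhdsWithin u (Ioi u))
        (nhds C) := by
      have := ((haxis u hu).abs).add_const C
      simpa using this
    have habs : Filter.Tendsto (fun t => |h u t|) (nhdsWithin u (Ioi u)) (nhds |h u u|) :=
      hcont.abs
    have hle : |h u u| ≤ C := by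
      refine le_of_tendsto_of_tendsto habs hRHS ?_
      filter_upwards [self_mem_nhdsWithin] with t ht
      have htu : u ≤ t := le_of_lt ht
      have h61 : |h u t| ≤ |h u t + ψ u t| + |ψ u t| := by
        have := abs_add_le (h u t + ψ u t) (-(ψ u t))
        simpa using this
      linarith [hψ u t hu htu]
    have : (0:ℝ) ≤ K * C := le_of_lt (mul_pos (lt_of_lt_of_le one_pos hK) hC)
    linarith
  · -- u < v
    -- key estimate for t ∈ Ioc u v
    have key : ∀ t, u < t → t ≤ v → |h u v| ≤ |h u t + ψ u t| + C + C * K := by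
      intro t htu htv
      have hut : u ≤ t := le_of_lt htu
      -- integrability of νv on [u, v]
      have hint : IntervalIntegrable (fun s => νv u s) volume u v := by
        have hmono : IntervalIntegrable (fun s => -νv u s) volume u v := by
          apply intervalIntegral.intervalIntegrable_deriv_of_nonneg (g := fun s => -ν u s)
          · intro x hx
            rw [uIcc_of_le huv] at hx
            exact ((hνd u x hu hx.1).neg).continuousAt.continuousWithinAt
          · intro x hx
            rw [min_eq_left huv, max_eq_right huv] at hx
            exact (hνd u x hu (le_of_lt hx.1)).neg
          · intro x hx
            rw [min_eq_left huv, max_eq_right huv] at hx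
            simpa using hνv u x hu (le_of_lt hx.1)
        have hrw : (fun s => νv u s) = -(fun s => -νv u s) := by funext s; simp
        rw [hrw]; exact hmono.neg
      have hint' : IntervalIntegrable (fun s => νv u s) volume t v :=
        hint.mono_set (by rw [uIcc_of_le huv, uIcc_of_le htv]; exact Icc_subset_Icc hut le_rfl)
      -- FTC for ν on [t, v]
      have hftc : ∫ s in t..v, νv u s = ν u v - ν u t := by
        apply intervalIntegral.integral_eq_sub_of_hasDerivAt
        · intro x hx
          rw [uIcc_of_le htv] at hx
          exact hνd u x hu (le_trans hut hx.1)
        · exact hint'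
      -- bound on ν u t - ν u v
      have hνbound : ν u t - ν u v ≤ K := by
        have heq : ∫ s in t..v, |νv u s| = ν u t - ν u v := by
          have : ∀ s ∈ uIcc t v, |νv u s| = -νv u s := by
            intro s hs
            rw [uIcc_of_le htv] at hs
            exact abs_of_nonpos (hνv u s hu (le_trans hut hs.1))
          rw [intervalIntegral.integral_congr this, intervalIntegral.integral_neg, hftc]
          ring
        have hsub : uIcc u t ⊆ uIcc u v := by
          rw [uIcc_of_le hut, uIcc_of_le huv]; exact Icc_subset_Icc le_rfl htv
        have hint1 : IntervalIntegrable (fun s => |νv u s|) volume u t :=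
          (hint.mono_set hsub).abs
        have hsplit : (∫ s in u..t, |νv u s|) + (∫ s in t..v, |νv u s|)
            = ∫ s in u..v, |νv u s| :=
          intervalIntegral.integral_add_adjacent_intervals hint1 hint'.abs
        have hpos : 0 ≤ ∫ s in u..t, |νv u s| :=
          intervalIntegral.integral_nonneg hut (fun s _ => abs_nonneg _)
        have hKt := hνint u v hu huv
        have h7 : (∫ s in t..v, |νv u s|) ≤ K := by linarith
        rw [heq] at h7; exact h7
      -- fencing theorem on [t, v]
      have hfence : ‖h u v - h u t‖ ≤ C * (ν u t - ν u v) := by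
        have := image_norm_le_of_norm_deriv_right_le_deriv_boundary'
          (f := fun s => h u s - h u t) (f' := fun s => νv u s * φ u s)
          (a := t) (b := v)
          (B := fun s => C * (ν u t - ν u s)) (B' := fun s => C * (-νv u s))
          ?hf ?hf' ?ha ?hB ?hB' ?bound (right_mem_Icc.2 htv)
        · simpa using this
        case hf =>
          intro x hx
          exact (((hhd u x hu (le_trans hut hx.1)).continuousAt).continuousWithinAt).sub
            continuousWithinAt_const
        case hf' =>
          intro x hx
          exact (((hhd u x hu (le_trans hut hx.1)).sub_const _)).hasDerivWithinAt
        case ha => simp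
        case hB =>
          intro x hx
          exact (continuousWithinAt_const.sub
            ((hνd u x hu (le_trans hut hx.1)).continuousAt.continuousWithinAt)).const_mul _
        case hB' =>
          intro x hx
          have := ((hνd u x hu (le_trans hut hx.1)).const_sub (ν u t)).const_mul C
          simpa using this.hasDerivWithinAt
        case bound =>
          intro x hx
          have hx1 : u ≤ x := le_trans hut hx.1
          have h1 : ‖νv u x * φ u x‖ = |νv u x| * |φ u x| := abs_mul _ _
          have h2 : |νv u x| * |φ u x| ≤ |νv u x| * C :=
            mul_le_mul_of_nonneg_left (hφ u x hu hx1) (abs_nonneg _)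
          have h3 : |νv u x| = -νv u x := abs_of_nonpos (hνv u x hu hx1)
          rw [h1, h3]
          calc -νv u x * |φ u x| ≤ -νv u x * C := by
                rw [← h3] at *; exact h2
            _ = C * (-νv u x) := by ring
      have hνnn : 0 ≤ ν u t - ν u v := by
        nlinarith [hfence, norm_nonneg (h u v - h u t)]
      have hCK : C * (ν u t - ν u v) ≤ C * K :=
        mul_le_mul_of_nonneg_left hνbound (le_of_lt hC)
      have h4 : |h u v| ≤ |h u t| + C * K := by
        have := abs_sub_abs_le_abs_sub (h u v) (h u t)
        have h5 : |h u v - h u t| ≤ C * K := le_trans hfence hCK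
        linarith
      have h6 : |h u t| ≤ |h u t + ψ u t| + C := by
        have h61 : |h u t| ≤ |h u t + ψ u t| + |ψ u t| := by
          have := abs_add_le (h u t + ψ u t) (-(ψ u t))
          simpa using this
        linarith [hψ u t hu hut]
      linarith
    -- pass to the limit t → u⁺
    have hev : ∀ᶠ t in nhdsWithin u (Ioi u), |h u v| - C - C * K ≤ |h u t + ψ u t| := by
      filter_upwards [Ioc_mem_nhdsGT_of_mem ⟨le_refl u, hlt⟩] with t ht
      have := key t ht.1 ht.2
      linarith
    have hlim : Filter.Tendsto (fun t => |h u t + ψ u t|) (nhdsWithin u (Ioi u)) (nhds 0) := by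
      simpa using (haxis u hu).abs
    have := ge_of_tendsto hlim hev
    linarith [mul_comm C K]
end
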